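/- In the leaf-order setup for a connected generalized block graph G (with leaf F_r, branches F_{t_1},…,F_{t_q}, and common intersection A of cardinality α), the set A is a minimal cut set of G, and for every subset T ⊆ [n] with the cut point property for G one has either A ⊆ T or A ∩ T = ∅. -/

import Mathlib

open scoped TensorProduct

namespace GBEI

/-! ### Graph-theoretic notions -/

/-- Number of connected components of a graph. -/
noncomputable def ncomp {V : Type} (G : SimpleGraph V) : ℕ :=
  Nat.card G.ConnectedComponent

/-- Number of connected components of the induced subgraph on the complement of `T`. -/
noncomputable def ncompDel {V : Type} (G : SimpleGraph V) (T : Finset V) : ℕ :=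
  Nat.card (G.induce ((↑T : Set V)ᶜ)).ConnectedComponent

/-- `T` is a cut set: deleting `T` increases the number of connected components. -/
def IsCutSet {V : Type} (G : SimpleGraph V) (T : Finset V) : Prop :=
  ncomp G < ncompDel G T

/-- `T` is a cut set which is minimal with respect to inclusion. -/
def IsMinimalCutSet {V : Type} (G : SimpleGraph V) (T : Finset V) : Prop :=
  IsCutSet G T ∧ ∀ T' ⊆ T, IsCutSet G T' → T' = T

/-- `aCount G i` is the number of minimal cut sets of `G` of cardinality `i`. -/
noncomputable def aCount {V : Type} (G : SimpleGraph V) (i : ℕ) : ℕ :=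
  Set.ncard {T : Finset V | IsMinimalCutSet G T ∧ T.card = i}

/-- `T` has the cut point property: for every `i ∈ T`,
`c(T \ {i}) < c(T)` where `c(T)` is the number of connected components of `G` restricted
to the complement of `T`. -/
def HasCutPointProperty {V : Type} [DecidableEq V] (G : SimpleGraph V) (T : Finset V) : Prop :=
  ∀ i ∈ T, ncompDel G (T.erase i) < ncompDel G T

/-- A graph is chordal if it has no induced cycle of length at least 4. -/
def Chordal {V : Type} (G : SimpleGraph V) : Prop :=
  ∀ k : ℕ, 4 ≤ k → IsEmpty (SimpleGraph.cycleGraph k ↪g G)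

/-- A maximal clique of `G`, as a finite set of vertices. -/
def IsMaxClique {V : Type} (G : SimpleGraph V) (s : Finset V) : Prop :=
  G.IsClique (↑s : Set V) ∧ ∀ t : Finset V, G.IsClique (↑t : Set V) → s ⊆ t → s = t

/-- A generalized block graph: a chordal graph in which, for any three (distinct) maximal
cliques with nonempty common intersection, the pairwise intersections all coincide. -/
def IsGeneralizedBlockGraph {V : Type} [DecidableEq V] (G : SimpleGraph V) : Prop :=
  Chordal G ∧
    ∀ F₁ F₂ F₃ : Finset V, IsMaxClique G F₁ → IsMaxClique G F₂ → IsMaxClique G F₃ →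
      F₁ ≠ F₂ → F₁ ≠ F₃ → F₂ ≠ F₃ → (F₁ ∩ F₂ ∩ F₃).Nonempty →
      F₁ ∩ F₂ = F₂ ∩ F₃ ∧ F₁ ∩ F₃ = F₂ ∩ F₃

/-- A block graph: a chordal graph in which any two distinct maximal cliques meet in at
most one vertex. -/
def IsBlockGraph {V : Type} [DecidableEq V] (G : SimpleGraph V) : Prop :=
  Chordal G ∧
    ∀ F₁ F₂ : Finset V, IsMaxClique G F₁ → IsMaxClique G F₂ → F₁ ≠ F₂ → (F₁ ∩ F₂).card ≤ 1

/-- The complete graph on a finite set `B` of vertices (with all other vertices isolated). -/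
def cliqueOn {V : Type} (B : Finset V) : SimpleGraph V where
  Adj u v := u ≠ v ∧ u ∈ B ∧ v ∈ B
  symm := ⟨fun u v ⟨h1, h2, h3⟩ => ⟨h1.symm, h3, h2⟩⟩
  loopless := ⟨fun u h => h.1 rfl⟩

/-- The graph obtained from `G` by deleting all vertices in `A` (keeping the ambient
vertex type; deleted vertices become isolated). Its edges are exactly the edges of the
induced subgraph of `G` on the complement of `A`. -/
def delVerts {V : Type} (G : SimpleGraph V) (A : Finset V) : SimpleGraph V where
  Adj u v := G.Adj u v ∧ u ∉ A ∧ v ∉ A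
  symm := ⟨fun u v ⟨h1, h2, h3⟩ => ⟨h1.symm, h3, h2⟩⟩
  loopless := ⟨fun u h => G.loopless.1 u h.1⟩

/-! ### The polynomial ring and generalized binomial edge ideals -/

/-- The polynomial ring `K[x_{kj} : 1 ≤ k ≤ m, 1 ≤ j ≤ n]`; the variable type carries the
lexicographic order in which `x_{11}` is the smallest index (hence the largest variable for
the induced lexicographic monomial order). -/
abbrev PolyS (K : Type) [Field K] (m n : ℕ) : Type := MvPolynomial (Fin m ×ₗ Fin n) K

/-- The variable `x_{kj}`. -/
noncomputable def xv (K : Type) [Field K] {m n : ℕ} (k : Fin m) (j : Fin n) : PolyS K m n :=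
  MvPolynomial.X (toLex (k, j))

/-- The 2-minor `[k,l|i,j] = x_{ki} x_{lj} - x_{li} x_{kj}`. -/
noncomputable def pminor (K : Type) [Field K] {m n : ℕ} (k l : Fin m) (i j : Fin n) :
    PolyS K m n :=
  xv K k i * xv K l j - xv K l i * xv K k j

/-- The generalized binomial edge ideal `𝔍_G` of a graph `G` on `[n]`. -/
noncomputable def gbei (K : Type) [Field K] (m : ℕ) {n : ℕ} (G : SimpleGraph (Fin n)) :
    Ideal (PolyS K m n) :=
  Ideal.span {f | ∃ (k l : Fin m) (i j : Fin n),
    k < l ∧ i < j ∧ G.Adj i j ∧ f = pminor K k l i j}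

/-- The ideal generated by the variables `x_{kj}`, `1 ≤ k ≤ m`, `j ∈ A`. -/
noncomputable def varsIdeal (K : Type) [Field K] (m : ℕ) {n : ℕ} (A : Finset (Fin n)) :
    Ideal (PolyS K m n) :=
  Ideal.span {f | ∃ (k : Fin m) (j : Fin n), j ∈ A ∧ f = xv K k j}

/-! ### Lexicographic initial ideals -/

/-- `d` is the exponent vector of the lexicographic leading monomial of `p`, for the
lexicographic order with `x_{11} > ⋯ > x_{1n} > x_{21} > ⋯ > x_{mn}`. -/
def IsLeadExp (K : Type) [Field K] {m n : ℕ} (p : PolyS K m n)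
    (d : (Fin m ×ₗ Fin n) →₀ ℕ) : Prop :=
  d ∈ p.support ∧ ∀ e ∈ p.support, e ≠ d → toLex e < toLex d

/-- The initial ideal of `I` with respect to the lexicographic order: the ideal generated
by the leading monomials of the nonzero elements of `I`. -/
noncomputable def iniIdeal (K : Type) [Field K] {m n : ℕ} (I : Ideal (PolyS K m n)) :
    Ideal (PolyS K m n) :=
  Ideal.span {f | ∃ p ∈ I, ∃ d, IsLeadExp K p d ∧ f = MvPolynomial.monomial d (1 : K)}

/-! ### Projective dimension, depth and Castelnuovo–Mumford regularity -/

/-- `M` admits a resolution `0 → F_k → ⋯ → F_1 → F_0 → M → 0` by finitely generated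
free `R`-modules. -/
def HasFreeResLen (R : Type) [CommRing R] (M : Type) [AddCommGroup M] [Module R M]
    (k : ℕ) : Prop :=
  ∃ (ι : ℕ → Type) (_ : ∀ i, Finite (ι i))
    (d : ∀ i : ℕ, (ι (i + 1) →₀ R) →ₗ[R] (ι i →₀ R)) (ε : (ι 0 →₀ R) →ₗ[R] M),
      (∀ i, k < i → IsEmpty (ι i)) ∧
      Function.Surjective ε ∧
      Function.Exact (d 0) ε ∧
      ∀ i, Function.Exact (d (i + 1)) (d i)

/-- The projective dimension of `M`: the smallest possible length of a finite free
resolution of `M`. -/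
noncomputable def projDim (R : Type) [CommRing R] (M : Type) [AddCommGroup M]
    [Module R M] : ℕ :=
  sInf {k | HasFreeResLen R M k}

/-- The depth of `S/I` (with respect to the irrelevant maximal ideal), via the
Auslander–Buchsbaum formula: `depth S/I = (number of variables) - projdim S/I`. -/
noncomputable def depthQuot {σ : Type} (K : Type) [Field K] (I : Ideal (MvPolynomial σ K)) :
    ℕ :=
  Nat.card σ - projDim (MvPolynomial σ K) (MvPolynomial σ K ⧸ I)

/-- `S/I` admits a graded free resolution (by finitely generated graded free modules,
with generator degrees `degs`) in which all shifts `j` occurring in homological degree `i`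
satisfy `j ≤ r + i`.  The minimum of all such `r` is the Castelnuovo–Mumford regularity
`max { j - i : β_{ij}(S/I) ≠ 0 }`. -/
def HasGradedFreeResRegLE {σ : Type} (K : Type) [Field K] (I : Ideal (MvPolynomial σ K))
    (r : ℕ) : Prop :=
  ∃ (len : ℕ) (ι : ℕ → Type) (_ : ∀ i, Finite (ι i)) (degs : ∀ i, ι i → ℕ)
    (d : ∀ i : ℕ, (ι (i + 1) →₀ MvPolynomial σ K) →ₗ[MvPolynomial σ K] (ι i →₀ MvPolynomial σ K))
    (ε : (ι 0 →₀ MvPolynomial σ K) →ₗ[MvPolynomial σ K] (MvPolynomial σ K ⧸ I)),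
      (∀ i, len < i → IsEmpty (ι i)) ∧
      Function.Surjective ε ∧
      Function.Exact (d 0) ε ∧
      (∀ i, Function.Exact (d (i + 1)) (d i)) ∧
      (∀ a : ι 0, ∃ p : MvPolynomial σ K,
        p.IsHomogeneous (degs 0 a) ∧ ε (Finsupp.single a 1) = Ideal.Quotient.mk I p) ∧
      (∀ (i : ℕ) (a : ι (i + 1)) (b : ι i),
        (d i (Finsupp.single a 1)) b = 0 ∨
        ∃ e, e + degs i b = degs (i + 1) a ∧ ((d i (Finsupp.single a 1)) b).IsHomogeneous e) ∧
      (∀ (i : ℕ) (a : ι i), degs i a ≤ r + i)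

/-- The Castelnuovo–Mumford regularity of `S/I`. -/
noncomputable def regQuot {σ : Type} (K : Type) [Field K] (I : Ideal (MvPolynomial σ K)) :
    ℕ :=
  sInf {r | HasGradedFreeResRegLE K I r}

/-- The height of a prime ideal `P` (junk value `0` if `P` is not prime). -/
noncomputable def primeHeight {R : Type} [CommRing R] (P : Ideal R) : ℕ∞ :=
  ⨆ h : P.IsPrime, Order.height (⟨P, h⟩ : PrimeSpectrum R)

/-- An ideal is unmixed if all of its minimal primes have the same height. -/
def IsUnmixed {R : Type} [CommRing R] (I : Ideal R) : Prop :=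
  ∀ P ∈ I.minimalPrimes, ∀ Q ∈ I.minimalPrimes, primeHeight P = primeHeight Q

end GBEI

namespace GBEI

/-- The generalized binomial edge ideal of (the restriction of) `G` inside the polynomial
ring `K[x_{kj} : 1 ≤ k ≤ m, j ∈ V]` on a subset `V` of the vertices. -/
noncomputable def gbeiOn (K : Type) [Field K] (m : ℕ) {n : ℕ} (G : SimpleGraph (Fin n))
    (V : Set (Fin n)) : Ideal (MvPolynomial (Fin m × V) K) :=
  Ideal.span {f | ∃ (k l : Fin m) (i j : V),
    k < l ∧ (i : Fin n) < (j : Fin n) ∧ G.Adj (i : Fin n) (j : Fin n) ∧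
    f = MvPolynomial.X (k, i) * MvPolynomial.X (l, j) -
        MvPolynomial.X (l, i) * MvPolynomial.X (k, j)}

/-- The degree-`dd` homogeneous component of `S/I`, the image of the space of homogeneous
polynomials of degree `dd`. -/
noncomputable def quotDeg {σ : Type} (K : Type) [Field K] (I : Ideal (MvPolynomial σ K))
    (dd : ℕ) : Submodule K (MvPolynomial σ K ⧸ I) :=
  Submodule.map (Ideal.Quotient.mkₐ K I).toLinearMap (MvPolynomial.homogeneousSubmodule σ K dd)

/-- The minimal prime `P_T(G)` of `𝔍_G` associated with a set `T` having the cut point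
property: it is generated by the variables `x_{kj}`, `j ∈ T`, together with the 2-minors
`[k,l|i,j]` for all pairs `i < j` of vertices lying in a common connected component of the
restriction of `G` to the complement of `T`. -/
noncomputable def cutPrime (K : Type) [Field K] (m : ℕ) {n : ℕ} (G : SimpleGraph (Fin n))
    (T : Finset (Fin n)) : Ideal (PolyS K m n) :=
  Ideal.span ({f | ∃ (k : Fin m) (j : Fin n), j ∈ T ∧ f = xv K k j} ∪
    {f | ∃ (k l : Fin m) (i j : Fin n) (hi : i ∈ ((↑T : Set (Fin n))ᶜ))
      (hj : j ∈ ((↑T : Set (Fin n))ᶜ)),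
      k < l ∧ i < j ∧ (G.induce ((↑T : Set (Fin n))ᶜ)).Reachable ⟨i, hi⟩ ⟨j, hj⟩ ∧
      f = pminor K k l i j})


/-!
Every maximal clique meeting `A` is the leaf or one of its branches, hence contains `A`. So any
two vertices `a, b ∈ A` satisfy `N(a) ⊆ N[b]`, and a walk through a deleted vertex of `A` can be
rerouted through any surviving vertex of `A`: deleting a proper subset of `A`, or restoring one
vertex of `A` while another one survives, merges components that were already connected. On the
other hand the leaf is attached to the rest of the graph only through `A`, so `A` is a cut set.
-/

section Graph

variable {V : Type} {G : SimpleGraph V}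

theorem exists_isMaxClique_of_adj [Finite V] {x y : V} (h : G.Adj x y) :
    ∃ s : Finset V, IsMaxClique G s ∧ x ∈ s ∧ y ∈ s := by
  classical
  obtain ⟨s, hxy, hs⟩ := Finite.exists_le_maximal (p := fun s : Finset V => G.IsClique (s : Set V))
    (a := {x, y}) (by simpa [SimpleGraph.isClique_pair] using fun _ => h)
  exact ⟨s, ⟨hs.1, fun t ht hst => le_antisymm hst (hs.2 ht hst)⟩, hxy (by simp), hxy (by simp)⟩

theorem exists_mem_notMem_of_isMaxClique {s s' : Finset V} (hs : IsMaxClique G s)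
    (hs' : IsMaxClique G s') (hne : s ≠ s') : ∃ x ∈ s, x ∉ s' := by
  by_contra! h
  exact hne (hs.2 s' hs'.1 h)

theorem neighborSet_subset_of_forall_isMaxClique [Finite V] {A : Finset V}
    (hA : ∀ s, IsMaxClique G s → ∀ c ∈ A, c ∈ s → A ⊆ s) {a b : V} (ha : a ∈ A) (hb : b ∈ A) :
    G.neighborSet a ⊆ insert b (G.neighborSet b) := by
  intro x hax
  obtain ⟨s, hs, has, hxs⟩ := exists_isMaxClique_of_adj hax
  by_cases hxb : x = b
  · exact Or.inl hxb
  · exact Or.inr (hs.1 (hA s hs a ha has hb) hxs (Ne.symm hxb))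

/-- A walk may be rerouted into `S`: a vertex outside `S` is bypassed through `b`, which is
adjacent to, or equal to, both of its neighbours on the walk. -/
theorem reachable_induce_of_walk {S : Set V} {b : V} (hb : b ∈ S) {x y : V} (w : G.Walk x y)
    (hw : ∀ c ∈ w.support, c ∉ S → G.neighborSet c ⊆ insert b (G.neighborSet b))
    (hx : x ∈ S) (hy : y ∈ S) : (G.induce S).Reachable ⟨x, hx⟩ ⟨y, hy⟩ := by
  have reach_b : ∀ u (hu : u ∈ S), u ∈ insert b (G.neighborSet b) →
      (G.induce S).Reachable ⟨b, hb⟩ ⟨u, hu⟩ := by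
    rintro u hu (rfl | hbu)
    · exact .refl _
    · exact (show (G.induce S).Adj ⟨b, hb⟩ ⟨u, hu⟩ from hbu).reachable
  suffices key : (∀ hx : x ∈ S, (G.induce S).Reachable ⟨x, hx⟩ ⟨y, hy⟩) ∧
      (x ∉ S → (G.induce S).Reachable ⟨b, hb⟩ ⟨y, hy⟩) from key.1 hx
  clear hx
  induction w with
  | nil => exact ⟨fun _ => .refl _, fun hy' => absurd hy hy'⟩
  | @cons x v y hxv w ih =>
    obtain ⟨ihv, ihb⟩ := ih (fun c hc => hw c (List.mem_cons_of_mem _ hc)) hy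
    refine ⟨fun hx => ?_, fun hx => ?_⟩ <;> by_cases hv : v ∈ S
    · exact (show (G.induce S).Adj ⟨x, hx⟩ ⟨v, hv⟩ from hxv).reachable.trans (ihv hv)
    · exact (reach_b x hx (hw v (by simp) hv hxv.symm)).symm.trans (ihb hv)
    · exact (reach_b v hv (hw x (by simp) hx hxv)).trans (ihv hv)
    · exact ihb hv

theorem preconnected_induce_of_neighborSet_subset (hG : G.Preconnected) {S : Set V} {b : V}
    (hb : b ∈ S) (h : ∀ c ∉ S, G.neighborSet c ⊆ insert b (G.neighborSet b)) :
    (G.induce S).Preconnected := by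
  rintro ⟨x, hx⟩ ⟨y, hy⟩
  obtain ⟨w⟩ := hG x y
  exact reachable_induce_of_walk hb w (fun c _ hc => h c hc) hx hy

theorem mem_of_reachable_induce {S C : Set V}
    (hC : ∀ x ∈ C, ∀ y, x ∈ S → y ∈ S → G.Adj x y → y ∈ C) {u v : S}
    (huv : (G.induce S).Reachable u v) (hu : (u : V) ∈ C) : (v : V) ∈ C := by
  obtain ⟨p⟩ := huv
  induction p with
  | nil => exact hu
  | @cons x y z hxy p ih => exact ih (hC x hu y x.2 y.2 hxy)

theorem ncomp_eq_one (hG : G.Connected) : ncomp G = 1 :=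
  Nat.card_eq_one_iff_unique.mpr
    ⟨hG.preconnected.subsingleton_connectedComponent, ⟨G.connectedComponentMk hG.nonempty.some⟩⟩

theorem not_isCutSet_of_preconnected (hG : G.Connected) {T : Finset V}
    (hT : (G.induce (↑T : Set V)ᶜ).Preconnected) : ¬ IsCutSet G T := by
  rw [IsCutSet, ncomp_eq_one hG, not_lt, ncompDel]
  have := hT.subsingleton_connectedComponent
  exact Finite.card_le_one_iff_subsingleton.mpr this

theorem isCutSet_of_not_reachable [Finite V] (hG : G.Connected) {T : Finset V}
    {u v : ((↑T : Set V)ᶜ : Set V)} (h : ¬ (G.induce (↑T : Set V)ᶜ).Reachable u v) :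
    IsCutSet G T := by
  rw [IsCutSet, ncomp_eq_one hG, ncompDel, Finite.one_lt_card_iff_nontrivial]
  exact ⟨_, _, mt SimpleGraph.ConnectedComponent.exact h⟩

theorem isMinimalCutSet_of_neighborSet_subset (hG : G.Connected) {A : Finset V}
    (hcut : IsCutSet G A)
    (hA : ∀ a ∈ A, ∀ b ∈ A, G.neighborSet a ⊆ insert b (G.neighborSet b)) :
    IsMinimalCutSet G A := by
  refine ⟨hcut, fun T hTA hT => by_contra fun hne => ?_⟩
  obtain ⟨b, hbA, hbT⟩ := Finset.exists_of_ssubset (hTA.ssubset_of_ne hne)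
  refine not_isCutSet_of_preconnected hG (preconnected_induce_of_neighborSet_subset
    hG.preconnected (S := (↑T : Set V)ᶜ) (by simpa using hbT) fun c hc => ?_) hT
  exact hA c (hTA (by simpa using hc)) b hbA

theorem ncompDel_le_ncompDel_erase [Finite V] [DecidableEq V] {T : Finset V} {a b : V}
    (hbT : b ∉ T) (hab : G.neighborSet a ⊆ insert b (G.neighborSet b)) :
    ncompDel G T ≤ ncompDel G (T.erase a) := by
  have hle : ((↑T : Set V)ᶜ) ≤ (↑(T.erase a) : Set V)ᶜ :=
    Set.compl_subset_compl.mpr (Finset.coe_subset.mpr (Finset.erase_subset a T))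
  refine Nat.card_le_card_of_injective
    (SimpleGraph.ConnectedComponent.map (SimpleGraph.induceHomOfLE G hle).toHom) ?_
  refine SimpleGraph.ConnectedComponent.ind₂ fun u v h => ?_
  rw [SimpleGraph.ConnectedComponent.map_mk, SimpleGraph.ConnectedComponent.map_mk,
    SimpleGraph.ConnectedComponent.eq] at h
  obtain ⟨p⟩ := h
  refine SimpleGraph.ConnectedComponent.sound (reachable_induce_of_walk (b := b)
    (by simpa using hbT) (p.map (SimpleGraph.Embedding.induce _).toHom) ?_ u.2 v.2)
  intro c hc hcT
  rw [SimpleGraph.Walk.support_map] at hc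
  obtain ⟨c', hc', rfl⟩ := List.mem_map.mp hc
  have hca : (c' : V) = a := by
    by_contra hne
    exact c'.2 (Finset.mem_erase.mpr ⟨hne, by simpa using hcT⟩)
  change G.neighborSet (c' : V) ⊆ _
  rw [hca]
  exact hab

theorem HasCutPointProperty.subset_or_disjoint [Finite V] [DecidableEq V] {T A : Finset V}
    (hT : HasCutPointProperty G T)
    (hA : ∀ a ∈ A, ∀ b ∈ A, G.neighborSet a ⊆ insert b (G.neighborSet b)) :
    A ⊆ T ∨ Disjoint A T := by
  by_contra! h
  obtain ⟨b, hbA, hbT⟩ := Finset.not_subset.mp h.1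
  obtain ⟨a, haA, haT⟩ := Finset.not_disjoint_iff.mp h.2
  exact (hT a haT).not_ge (ncompDel_le_ncompDel_erase hbT (hA a haA b hbA))

end Graph

section LeafOrder

variable {V ι κ : Type} [DecidableEq V] {G : SimpleGraph V} {F : ι → Finset V} {lst : ι}
  {t : κ → ι} {A : Finset V}

theorem subset_of_isMaxClique_of_mem (hFall : ∀ s, IsMaxClique G s → ∃ i, F i = s)
    (hbr : ∀ k, k ≠ lst → (F k ∩ F lst).Nonempty → ∃ i, t i = k)
    (hA : ∀ i, F (t i) ∩ F lst = A) (hAlst : A ⊆ F lst) {s : Finset V} (hs : IsMaxClique G s)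
    {c : V} (hcA : c ∈ A) (hcs : c ∈ s) : A ⊆ s := by
  obtain ⟨k, rfl⟩ := hFall s hs
  by_cases hk : k = lst
  · exact hk ▸ hAlst
  · obtain ⟨i, rfl⟩ := hbr k hk ⟨c, Finset.mem_inter.mpr ⟨hcs, hAlst hcA⟩⟩
    exact hA i ▸ Finset.inter_subset_left

theorem neighborSet_subset_of_mem_leaf [Finite V] (hFall : ∀ s, IsMaxClique G s → ∃ i, F i = s)
    (hbr : ∀ k, k ≠ lst → (F k ∩ F lst).Nonempty → ∃ i, t i = k)
    (hA : ∀ i, F (t i) ∩ F lst = A) {x : V} (hx : x ∈ F lst) (hxA : x ∉ A) :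
    G.neighborSet x ⊆ F lst := by
  intro y hxy
  obtain ⟨s, hs, hxs, hys⟩ := exists_isMaxClique_of_adj hxy
  obtain ⟨k, rfl⟩ := hFall s hs
  by_cases hk : k = lst
  · exact hk ▸ hys
  · obtain ⟨i, rfl⟩ := hbr k hk ⟨x, Finset.mem_inter.mpr ⟨hxs, hx⟩⟩
    exact absurd (hA i ▸ Finset.mem_inter.mpr ⟨hxs, hx⟩) hxA

theorem isCutSet_of_leaf [Finite V] (hG : G.Connected) (hmc : ∀ i, IsMaxClique G (F i))
    (hFall : ∀ s, IsMaxClique G s → ∃ i, F i = s)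
    (hbr : ∀ k, k ≠ lst → (F k ∩ F lst).Nonempty → ∃ i, t i = k)
    (hA : ∀ i, F (t i) ∩ F lst = A) {i₀ : κ} (hne : F (t i₀) ≠ F lst) : IsCutSet G A := by
  obtain ⟨v, hv, hvt⟩ := exists_mem_notMem_of_isMaxClique (hmc lst) (hmc (t i₀)) hne.symm
  obtain ⟨w, hw, hwl⟩ := exists_mem_notMem_of_isMaxClique (hmc (t i₀)) (hmc lst) hne
  have hvA : v ∉ A := fun h => hvt ((hA i₀ ▸ Finset.inter_subset_left : A ⊆ _) h)
  have hwA : w ∉ A := fun h => hwl ((hA i₀ ▸ Finset.inter_subset_right : A ⊆ _) h)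
  refine isCutSet_of_not_reachable hG (u := ⟨v, hvA⟩) (v := ⟨w, hwA⟩) fun hvw => hwl ?_
  exact mem_of_reachable_induce (C := F lst)
    (fun x hx _ hxA _ hxy => neighborSet_subset_of_mem_leaf hFall hbr hA hx hxA hxy) hvw hv

end LeafOrder

theorem leafOrder_inter_isMinimalCutSet_general
    (n r q : ℕ) (hq : 1 ≤ q)
    (G : SimpleGraph (Fin n)) (hGconn : G.Connected)
    (F : Fin r → Finset (Fin n))
    (hmc : ∀ i, IsMaxClique G (F i))
    (hFinj : Function.Injective F)
    (hFall : ∀ s : Finset (Fin n), IsMaxClique G s → ∃ i, F i = s)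
    (lst : Fin r)
    (t : Fin q → Fin r) (htne : ∀ i, t i ≠ lst)
    (hbr : ∀ k : Fin r, k ≠ lst → ((∃ i, t i = k) ↔ (F k ∩ F lst).Nonempty))
    (A : Finset (Fin n))
    (hA1 : ∀ i, F (t i) ∩ F lst = A) :
    IsMinimalCutSet G A ∧
    ∀ T : Finset (Fin n), HasCutPointProperty G T → A ⊆ T ∨ A ∩ T = ∅ := by
  have hbr' : ∀ k, k ≠ lst → (F k ∩ F lst).Nonempty → ∃ i, t i = k :=
    fun k hk => (hbr k hk).mpr
  let i₀ : Fin q := ⟨0, hq⟩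
  have hAlst : A ⊆ F lst := hA1 i₀ ▸ Finset.inter_subset_right
  have hA : ∀ a ∈ A, ∀ b ∈ A, G.neighborSet a ⊆ insert b (G.neighborSet b) :=
    fun a ha b hb => neighborSet_subset_of_forall_isMaxClique
      (fun _ hs _ hc hcs => subset_of_isMaxClique_of_mem hFall hbr' hA1 hAlst hs hc hcs) ha hb
  have hcut : IsCutSet G A :=
    isCutSet_of_leaf hGconn hmc hFall hbr' hA1 (i₀ := i₀) fun h => htne i₀ (hFinj h)
  refine ⟨isMinimalCutSet_of_neighborSet_subset hGconn hcut hA, fun T hT => ?_⟩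
  exact (hT.subset_or_disjoint hA).imp_right Finset.disjoint_iff_inter_eq_empty.mp

/-- in the leaf-order setup, `A` is a minimal cut set of `G`, and every
set `T` with the cut point property satisfies `A ⊆ T` or `A ∩ T = ∅`. -/
theorem leafOrder_inter_isMinimalCutSet
    (n r q α : ℕ) (hn : 2 ≤ n) (hr : 1 < r) (hq : 1 ≤ q) (hα : 1 ≤ α)
    (G : SimpleGraph (Fin n)) (hGconn : G.Connected) (hgb : IsGeneralizedBlockGraph G)
    (F : Fin r → Finset (Fin n))
    (hmc : ∀ i, IsMaxClique G (F i))
    (hFinj : Function.Injective F)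
    (hFall : ∀ s : Finset (Fin n), IsMaxClique G s → ∃ i, F i = s)
    (lst : Fin r) (hlst : ∀ i : Fin r, i ≤ lst)
    (hleaf : ∀ i : Fin r, (i : ℕ) ≠ 0 → ∃ j, j < i ∧ ∀ k, k < i → F k ∩ F i ⊆ F j ∩ F i)
    (t : Fin q → Fin r) (htinj : Function.Injective t) (htne : ∀ i, t i ≠ lst)
    (hbr : ∀ k : Fin r, k ≠ lst → ((∃ i, t i = k) ↔ (F k ∩ F lst).Nonempty))
    (A : Finset (Fin n)) (hcard : A.card = α)
    (hA1 : ∀ i, F (t i) ∩ F lst = A)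
    (hA2 : ∀ i j, i ≠ j → F (t i) ∩ F (t j) = A) :
    IsMinimalCutSet G A ∧
    ∀ T : Finset (Fin n), HasCutPointProperty G T → A ⊆ T ∨ A ∩ T = ∅ :=
  leafOrder_inter_isMinimalCutSet_general n r q hq G hGconn F hmc hFinj hFall lst t htne hbr A hA1

end GBEI
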